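/- Let G be a connected graph with n(G) ≥ 3 vertices and let Ĝ be the graph obtained from G by adding a new vertex w adjacent to every vertex of G, and then, for every vertex u ∈ V(G) ∪ {w}, adding ⌈log₂(n(G)+1)⌉ + 1 new pendant vertices each adjacent only to u. Then γ_Zg(Ĝ) = γ(Ĝ) = (γ_g(Ĝ) + 1)/2 = n(G) + 1. -/

import Mathlib

open Finset

open scoped Classical

noncomputable section

namespace ZGamePaper

variable {V : Type*} {W : Type*}

/-- The closed neighborhood `N[v]` of a vertex as a `Finset`. -/
def closedNF [Fintype V] (G : SimpleGraph V) (v : V) : Finset V :=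
  Finset.univ.filter fun x => x = v ∨ G.Adj v x

/-- The open neighborhood `N(v)` of a vertex as a `Finset`. -/
def openNF [Fintype V] (G : SimpleGraph V) (v : V) : Finset V :=
  Finset.univ.filter fun x => G.Adj v x

lemma openNF_subset_closedNF [Fintype V] (G : SimpleGraph V) (v : V) :
    openNF G v ⊆ closedNF G v := by
  intro x hx
  simp only [openNF, closedNF, mem_filter] at hx ⊢
  exact ⟨hx.1, Or.inr hx.2⟩

lemma measure_dec [Fintype V] {A C : Finset V} {w : V} (hw : w ∈ C) (hwA : w ∉ A) :
    (Finset.univ \ (A ∪ C)).card < (Finset.univ \ A).card := by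
  apply Finset.card_lt_card
  rw [Finset.ssubset_iff_of_subset
    (Finset.sdiff_subset_sdiff (le_refl _) Finset.subset_union_left)]
  refine ⟨w, ?_, ?_⟩
  · simp [hwA]
  · simp [hw]

/-! ### The Z-domination game -/

/-- The set of legal moves in the Z-domination game, given the set `A` of
already dominated vertices: a vertex `v` is legal if `N(v) ⊄ A`. -/
def zLegal [Fintype V] (G : SimpleGraph V) (A : Finset V) : Finset V :=
  Finset.univ.filter fun v => ¬ openNF G v ⊆ A

lemma zLegal_dec [Fintype V] (G : SimpleGraph V) (A : Finset V) {v : V}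
    (hv : v ∈ zLegal G A) :
    (Finset.univ \ (A ∪ closedNF G v)).card < (Finset.univ \ A).card := by
  simp only [zLegal, mem_filter] at hv
  obtain ⟨w, hw1, hw2⟩ := Finset.not_subset.mp hv.2
  exact measure_dec (openNF_subset_closedNF G v hw1) hw2

/-- The optimal number of remaining moves in the Z-domination game played on `G`,
where `A` is the set of already dominated vertices and `turn = true` iff it is
Dominator's (the minimizer's) turn. -/
def zVal [Fintype V] (G : SimpleGraph V) (turn : Bool) (A : Finset V) : ℕ :=
  if h : (zLegal G A).Nonempty then
    if turn then
      1 + ((zLegal G A).attach.inf' h.attach fun v => zVal G false (A ∪ closedNF G v.1))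
    else
      1 + ((zLegal G A).attach.sup' h.attach fun v => zVal G true (A ∪ closedNF G v.1))
  else 0
termination_by (Finset.univ \ A).card
decreasing_by
  · exact zLegal_dec G A v.2
  · exact zLegal_dec G A v.2

/-- The game Z-domination number `γ_Zg(G)` (Dominator starts). -/
def gammaZg [Fintype V] (G : SimpleGraph V) : ℕ := zVal G true ∅

/-- The Staller-start game Z-domination number `γ'_Zg(G)`. -/
def gammaZg' [Fintype V] (G : SimpleGraph V) : ℕ := zVal G false ∅

/-! ### The (ordinary) domination game -/

/-- The set of legal moves in the domination game: `v` is legal if `N[v] ⊄ A`.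
This set is nonempty if and only if `A ≠ V(G)`. -/
def dLegal [Fintype V] (G : SimpleGraph V) (A : Finset V) : Finset V :=
  Finset.univ.filter fun v => ¬ closedNF G v ⊆ A

lemma dLegal_dec [Fintype V] (G : SimpleGraph V) (A : Finset V) {v : V}
    (hv : v ∈ dLegal G A) :
    (Finset.univ \ (A ∪ closedNF G v)).card < (Finset.univ \ A).card := by
  simp only [dLegal, mem_filter] at hv
  obtain ⟨w, hw1, hw2⟩ := Finset.not_subset.mp hv.2
  exact measure_dec hw1 hw2

/-- The optimal number of remaining moves in the domination game on `G`, with `A`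
the set of already dominated vertices; `turn = true` iff it is Dominator's turn.
(There is no legal move iff `A = V(G)`.) -/
def dVal [Fintype V] (G : SimpleGraph V) (turn : Bool) (A : Finset V) : ℕ :=
  if h : (dLegal G A).Nonempty then
    if turn then
      1 + ((dLegal G A).attach.inf' h.attach fun v => dVal G false (A ∪ closedNF G v.1))
    else
      1 + ((dLegal G A).attach.sup' h.attach fun v => dVal G true (A ∪ closedNF G v.1))
  else 0
termination_by (Finset.univ \ A).card
decreasing_by
  · exact dLegal_dec G A v.2
  · exact dLegal_dec G A v.2

/-- The game domination number `γ_g(G)` (Dominator starts). -/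
def gammaGg [Fintype V] (G : SimpleGraph V) : ℕ := dVal G true ∅

/-- The Staller-start game domination number `γ'_g(G)`. -/
def gammaGg' [Fintype V] (G : SimpleGraph V) : ℕ := dVal G false ∅

/-! ### The total domination game -/

/-- The set of legal moves in the total domination game: `v` is legal if `N(v) ⊄ B`.
For a graph without isolated vertices this set is nonempty iff `B ≠ V(G)`. -/
def tLegal [Fintype V] (G : SimpleGraph V) (B : Finset V) : Finset V :=
  Finset.univ.filter fun v => ¬ openNF G v ⊆ B

lemma tLegal_dec [Fintype V] (G : SimpleGraph V) (B : Finset V) {v : V}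
    (hv : v ∈ tLegal G B) :
    (Finset.univ \ (B ∪ openNF G v)).card < (Finset.univ \ B).card := by
  simp only [tLegal, mem_filter] at hv
  obtain ⟨w, hw1, hw2⟩ := Finset.not_subset.mp hv.2
  exact measure_dec hw1 hw2

/-- The optimal number of remaining moves in the total domination game on `G`,
with `B` the set of already totally dominated vertices; `turn = true` iff it is
Dominator's turn. -/
def tVal [Fintype V] (G : SimpleGraph V) (turn : Bool) (B : Finset V) : ℕ :=
  if h : (tLegal G B).Nonempty then
    if turn then
      1 + ((tLegal G B).attach.inf' h.attach fun v => tVal G false (B ∪ openNF G v.1))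
    else
      1 + ((tLegal G B).attach.sup' h.attach fun v => tVal G true (B ∪ openNF G v.1))
  else 0
termination_by (Finset.univ \ B).card
decreasing_by
  · exact tLegal_dec G B v.2
  · exact tLegal_dec G B v.2

/-- The game total domination number `γ_tg(G)` (Dominator starts). -/
def gammaTg [Fintype V] (G : SimpleGraph V) : ℕ := tVal G true ∅

/-! ### The L-domination game -/

/-- The set of legal moves in the L-domination game, given the set `P` of vertices
played so far: `v` is legal if `v ∉ P` and `N[v] ⊄ N(P)`. -/
def lLegal [Fintype V] (G : SimpleGraph V) (P : Finset V) : Finset V :=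
  Finset.univ.filter fun v => v ∉ P ∧ ¬ closedNF G v ⊆ P.biUnion (openNF G)

lemma lLegal_dec [Fintype V] (G : SimpleGraph V) (P : Finset V) {v : V}
    (hv : v ∈ lLegal G P) :
    (Finset.univ \ insert v P).card < (Finset.univ \ P).card := by
  simp only [lLegal, mem_filter] at hv
  apply Finset.card_lt_card
  rw [Finset.ssubset_iff_of_subset
    (Finset.sdiff_subset_sdiff (le_refl _) (Finset.subset_insert _ _))]
  exact ⟨v, by simp [hv.2.1], by simp⟩

/-- The optimal number of remaining moves in the L-domination game on `G`, with `P`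
the set of vertices played so far; `turn = true` iff it is Dominator's turn. -/
def lVal [Fintype V] (G : SimpleGraph V) (turn : Bool) (P : Finset V) : ℕ :=
  if h : (lLegal G P).Nonempty then
    if turn then
      1 + ((lLegal G P).attach.inf' h.attach fun v => lVal G false (insert v.1 P))
    else
      1 + ((lLegal G P).attach.sup' h.attach fun v => lVal G true (insert v.1 P))
  else 0
termination_by (Finset.univ \ P).card
decreasing_by
  · exact lLegal_dec G P v.2
  · exact lLegal_dec G P v.2

/-- The game L-domination number `γ_Lg(G)` (Dominator starts). -/
def gammaLg [Fintype V] (G : SimpleGraph V) : ℕ := lVal G true ∅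

/-! ### Domination number and related notions -/

/-- The domination number `γ(G)`: the minimum size of a set `S` with `N[S] = V(G)`. -/
def gammaNum [Fintype V] (G : SimpleGraph V) : ℕ :=
  sInf {k | ∃ S : Finset V, S.card = k ∧ ∀ v : V, ∃ u ∈ S, v ∈ closedNF G u}

/-- The partially dominated graph `G|A` has a Z-configuration if there is an
undominated vertex `v` all of whose neighbors are dominated, while every neighbor
of `v` has at least two undominated neighbors. -/
def HasZConfig [Fintype V] (G : SimpleGraph V) (A : Finset V) : Prop :=
  ∃ v : V, v ∉ A ∧ openNF G v ⊆ A ∧ ∀ u ∈ openNF G v, 2 ≤ (openNF G u \ A).card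

/-- A graph without isolated vertices is Z-insensitive if for every `D ⊆ V(G)` the
partially dominated graph `G|N[D]` has no Z-configuration. -/
def ZInsensitive [Fintype V] (G : SimpleGraph V) : Prop :=
  (∀ v : V, ∃ u : V, G.Adj v u) ∧
    ∀ D : Finset V, ¬ HasZConfig G (D.biUnion (closedNF G))

/-- A vertex `w` is the center of a claw if it has three pairwise non-adjacent
neighbors. -/
def IsClawCenter (G : SimpleGraph V) (w : V) : Prop :=
  ∃ a b c : V, G.Adj w a ∧ G.Adj w b ∧ G.Adj w c ∧ a ≠ b ∧ a ≠ c ∧ b ≠ c ∧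
    ¬ G.Adj a b ∧ ¬ G.Adj a c ∧ ¬ G.Adj b c

/-- A graph is weakly claw-free if every vertex has a neighbor that is not the
center of a claw. -/
def WeaklyClawFree (G : SimpleGraph V) : Prop :=
  ∀ v : V, ∃ u : V, G.Adj v u ∧ ¬ IsClawCenter G u

/-- The lexicographic product `G ∘ H`. -/
def lexProd (G : SimpleGraph V) (H : SimpleGraph W) : SimpleGraph (V × W) where
  Adj p q := G.Adj p.1 q.1 ∨ (p.1 = q.1 ∧ H.Adj p.2 q.2)
  symm := ⟨by
    rintro p q (h | ⟨h1, h2⟩)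
    · exact Or.inl h.symm
    · exact Or.inr ⟨h1.symm, h2.symm⟩⟩
  loopless := ⟨by
    rintro p (h | ⟨_, h⟩)
    · exact G.loopless.irrefl _ h
    · exact H.loopless.irrefl _ h⟩


/-- The graph `Ĝ` obtained from `G` by adding a universal vertex `w` and then
attaching `k` pendant vertices to each vertex of `V(G) ∪ {w}`. The vertex
`Sum.inl (Sum.inl u)` is an original vertex of `G`, `Sum.inl (Sum.inr ())` is `w`,
and `Sum.inr (x, i)` is the `i`-th pendant vertex attached to `x`. -/
def hatG {V : Type*} (G : SimpleGraph V) (k : ℕ) :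
    SimpleGraph ((V ⊕ Unit) ⊕ (V ⊕ Unit) × Fin k) :=
  SimpleGraph.fromRel fun x y =>
    match x, y with
    | Sum.inl (Sum.inl u), Sum.inl (Sum.inl v) => G.Adj u v
    | Sum.inl (Sum.inl _), Sum.inl (Sum.inr _) => True
    | Sum.inl x, Sum.inr p => p.1 = x
    | _, _ => False

/-!
Every closed neighbourhood in `Ĝ` meets the pendant vertices of at most one support vertex (a
vertex of `G` or `w`), so the `n + 1` supports with their pendants behave like independent stars.
One pendant per star is a packing and the supports dominate, so `γ(Ĝ) = n + 1`. In the Z-game the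
support of a star with an undominated pendant stays legal and each move finishes at most one star,
so at least `n + 1` moves are played; opening with `w` dominates every support, after which only
vertices of `G` are legal, each at most once.

In the domination game Dominator finishes one star per move, so `γ_g(Ĝ) ≤ 2(n + 1) - 1`. Staller
always plays an undominated pendant of a star with the most undominated pendants. Weigh a star with
`c ≥ 1` undominated pendants by `2^(k-c)`; with `Q = 2^(k-1)` the total weight `W` starts at
`n + 1 ≤ Q`. The invariant: with `m` unfinished stars, at least `2m - t` moves remain if
`W ≤ t·Q` and Dominator is to move, or if `W < (t+1)·Q` and Staller is to move. A Dominator move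
that finishes no star raises `W` by less than `Q`. Staller's move doubles the weight of the
heaviest star, which divides every weight, so `W` stays at most `(t+1)·Q`; she finishes a star only
when every star has weight `Q` or `0`, i.e. `W = m·Q`, which forces `m ≤ t`.
-/

section Games

variable [Fintype V] (G : SimpleGraph V) {A : Finset V} {v : V} {n : ℕ}

@[simp] lemma mem_closedNF {x : V} : x ∈ closedNF G v ↔ x = v ∨ G.Adj v x := by
  simp [closedNF]

@[simp] lemma mem_openNF {x : V} : x ∈ openNF G v ↔ G.Adj v x := by
  simp [openNF]

lemma mem_closedNF_comm {x : V} : x ∈ closedNF G v ↔ v ∈ closedNF G x := by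
  simp only [mem_closedNF, G.adj_comm, eq_comm]

lemma self_mem_closedNF : v ∈ closedNF G v := by simp

lemma mem_zLegal : v ∈ zLegal G A ↔ ¬ openNF G v ⊆ A := by simp [zLegal]

lemma mem_dLegal : v ∈ dLegal G A ↔ ¬ closedNF G v ⊆ A := by simp [dLegal]

lemma zLegal_subset_dLegal : zLegal G A ⊆ dLegal G A := fun v hv =>
  (mem_dLegal G).2 fun h => (mem_zLegal G).1 hv ((openNF_subset_closedNF G v).trans h)

lemma zVal_eq_zero (b : Bool) (h : ¬ (zLegal G A).Nonempty) : zVal G b A = 0 := by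
  rw [zVal, dif_neg h]

lemma dVal_eq_zero (b : Bool) (h : ¬ (dLegal G A).Nonempty) : dVal G b A = 0 := by
  rw [dVal, dif_neg h]

-- The games are defined with the classical instance, to which any other is equal.
variable [DecidableEq V]

lemma card_sdiff_union_closedNF_lt (hv : v ∈ dLegal G A) :
    #(univ \ (A ∪ closedNF G v)) < #(univ \ A) := by
  obtain rfl : ‹DecidableEq V› = fun a b => Classical.propDecidable (a = b) :=
    Subsingleton.elim _ _
  exact dLegal_dec G A hv

lemma zVal_le_add_one (b : Bool)
    (h : ∀ v ∈ zLegal G A, zVal G (!b) (A ∪ closedNF G v) ≤ n) : zVal G b A ≤ n + 1 := by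
  obtain rfl : ‹DecidableEq V› = fun a b => Classical.propDecidable (a = b) :=
    Subsingleton.elim _ _
  by_cases hne : (zLegal G A).Nonempty
  · obtain ⟨v, hv⟩ := hne
    rw [zVal, dif_pos ⟨v, hv⟩]
    cases b <;> simp only [Bool.false_eq_true, ↓reduceIte, add_comm 1, add_le_add_iff_right,
      sup'_le_iff, inf'_le_iff, mem_attach, true_and, true_implies, Subtype.forall,
      Subtype.exists, Bool.not_false, Bool.not_true] at h ⊢
    exacts [h, ⟨v, hv, h v hv⟩]
  · simp [zVal_eq_zero G b hne]

lemma add_one_le_zVal (b : Bool) (hne : (zLegal G A).Nonempty)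
    (h : ∀ v ∈ zLegal G A, n ≤ zVal G (!b) (A ∪ closedNF G v)) : n + 1 ≤ zVal G b A := by
  obtain rfl : ‹DecidableEq V› = fun a b => Classical.propDecidable (a = b) :=
    Subsingleton.elim _ _
  obtain ⟨v, hv⟩ := hne
  rw [zVal, dif_pos ⟨v, hv⟩]
  cases b <;> simp only [Bool.false_eq_true, ↓reduceIte, add_comm 1, add_le_add_iff_right,
      le_sup'_iff, le_inf'_iff, mem_attach, true_and, true_implies, Subtype.forall,
      Subtype.exists, Bool.not_false, Bool.not_true] at h ⊢
  exacts [⟨v, hv, h v hv⟩, h]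

lemma zVal_true_le (hv : v ∈ zLegal G A) :
    zVal G true A ≤ zVal G false (A ∪ closedNF G v) + 1 := by
  obtain rfl : ‹DecidableEq V› = fun a b => Classical.propDecidable (a = b) :=
    Subsingleton.elim _ _
  rw [zVal, dif_pos ⟨v, hv⟩]
  simp only [↓reduceIte, add_comm 1, add_le_add_iff_right, inf'_le_iff, mem_attach, true_and,
    Subtype.exists]
  exact ⟨v, hv, le_rfl⟩

lemma dVal_le_add_one (b : Bool)
    (h : ∀ v ∈ dLegal G A, dVal G (!b) (A ∪ closedNF G v) ≤ n) : dVal G b A ≤ n + 1 := by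
  obtain rfl : ‹DecidableEq V› = fun a b => Classical.propDecidable (a = b) :=
    Subsingleton.elim _ _
  by_cases hne : (dLegal G A).Nonempty
  · obtain ⟨v, hv⟩ := hne
    rw [dVal, dif_pos ⟨v, hv⟩]
    cases b <;> simp only [Bool.false_eq_true, ↓reduceIte, add_comm 1, add_le_add_iff_right,
      sup'_le_iff, inf'_le_iff, mem_attach, true_and, true_implies, Subtype.forall,
      Subtype.exists, Bool.not_false, Bool.not_true] at h ⊢
    exacts [h, ⟨v, hv, h v hv⟩]
  · simp [dVal_eq_zero G b hne]

lemma add_one_le_dVal (b : Bool) (hne : (dLegal G A).Nonempty)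
    (h : ∀ v ∈ dLegal G A, n ≤ dVal G (!b) (A ∪ closedNF G v)) : n + 1 ≤ dVal G b A := by
  obtain rfl : ‹DecidableEq V› = fun a b => Classical.propDecidable (a = b) :=
    Subsingleton.elim _ _
  obtain ⟨v, hv⟩ := hne
  rw [dVal, dif_pos ⟨v, hv⟩]
  cases b <;> simp only [Bool.false_eq_true, ↓reduceIte, add_comm 1, add_le_add_iff_right,
      le_sup'_iff, le_inf'_iff, mem_attach, true_and, true_implies, Subtype.forall,
      Subtype.exists, Bool.not_false, Bool.not_true] at h ⊢
  exacts [⟨v, hv, h v hv⟩, h]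

lemma dVal_true_le (hv : v ∈ dLegal G A) :
    dVal G true A ≤ dVal G false (A ∪ closedNF G v) + 1 := by
  obtain rfl : ‹DecidableEq V› = fun a b => Classical.propDecidable (a = b) :=
    Subsingleton.elim _ _
  rw [dVal, dif_pos ⟨v, hv⟩]
  simp only [↓reduceIte, add_comm 1, add_le_add_iff_right, inf'_le_iff, mem_attach, true_and,
    Subtype.exists]
  exact ⟨v, hv, le_rfl⟩

lemma dVal_true_add_one_le_dVal_false (hv : v ∈ dLegal G A) :
    dVal G true (A ∪ closedNF G v) + 1 ≤ dVal G false A := by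
  obtain rfl : ‹DecidableEq V› = fun a b => Classical.propDecidable (a = b) :=
    Subsingleton.elim _ _
  conv_rhs => rw [dVal, dif_pos ⟨v, hv⟩]
  simp only [Bool.false_eq_true, ↓reduceIte, add_comm 1, add_le_add_iff_right, le_sup'_iff,
    mem_attach, true_and, Subtype.exists]
  exact ⟨v, hv, le_rfl⟩

theorem le_zVal_of_potential (φ : Finset V → ℕ)
    (hlegal : ∀ A, φ A ≠ 0 → (zLegal G A).Nonempty)
    (hstep : ∀ A, ∀ v ∈ zLegal G A, φ A ≤ φ (A ∪ closedNF G v) + 1)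
    (b : Bool) (A : Finset V) :
    φ A ≤ zVal G b A := by
  by_cases hA : φ A = 0
  · simp [hA]
  have key := add_one_le_zVal G b (n := φ A - 1) (hlegal A hA) fun v hv =>
    (Nat.sub_le_of_le_add (hstep A v hv)).trans (le_zVal_of_potential φ hlegal hstep (!b) _)
  omega
termination_by #(univ \ A)
decreasing_by exact card_sdiff_union_closedNF_lt G (zLegal_subset_dLegal G hv)

theorem zVal_le_card_zLegal (b : Bool) (A : Finset V) : zVal G b A ≤ #(zLegal G A) := by
  obtain ⟨v₀, hv₀⟩ | hne := (zLegal G A).eq_empty_or_nonempty.symm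
  · have key := zVal_le_add_one G b (n := #(zLegal G A) - 1) fun v hv => by
      have hsub : zLegal G (A ∪ closedNF G v) ⊆ (zLegal G A).erase v := fun u hu => by
        simp only [mem_zLegal, mem_erase] at hu hv ⊢
        refine ⟨?_, fun h => hu (h.trans subset_union_left)⟩
        rintro rfl
        exact hu ((openNF_subset_closedNF G u).trans subset_union_right)
      calc zVal G (!b) (A ∪ closedNF G v) ≤ #(zLegal G (A ∪ closedNF G v)) :=
            zVal_le_card_zLegal (!b) _
        _ ≤ #((zLegal G A).erase v) := card_le_card hsub
        _ = #(zLegal G A) - 1 := card_erase_of_mem hv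
    have := card_pos.2 ⟨v₀, hv₀⟩
    omega
  · simp [zVal_eq_zero G b (not_nonempty_iff_eq_empty.2 hne)]
termination_by #(univ \ A)
decreasing_by exact card_sdiff_union_closedNF_lt G (zLegal_subset_dLegal G hv)

end Games

section Domination

variable [Fintype V] {G : SimpleGraph V} {A S : Finset V}

def IsDominatingSet (G : SimpleGraph V) (S : Finset V) : Prop :=
  ∀ x, ∃ s ∈ S, x ∈ closedNF G s

lemma gammaNum_le_card (hS : IsDominatingSet G S) : gammaNum G ≤ #S :=
  Nat.sInf_le ⟨S, rfl, hS⟩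

lemma card_le_gammaNum {ι : Type*} [Fintype ι] (p : ι → V)
    (hp : Pairwise fun i j => Disjoint (closedNF G (p i)) (closedNF G (p j))) :
    Fintype.card ι ≤ gammaNum G := by
  refine le_csInf ⟨_, univ, rfl, fun x => ⟨x, mem_univ x, self_mem_closedNF G⟩⟩ ?_
  rintro _ ⟨S, rfl, hS⟩
  choose f hfS hf using fun i => hS (p i)
  have hinj : Function.Injective f := fun i j hij => by
    by_contra hne
    refine disjoint_left.1 (hp hne) ((mem_closedNF_comm G).1 (hf i)) ?_
    exact hij ▸ (mem_closedNF_comm G).1 (hf j)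
  rw [← card_univ]
  exact card_le_card_of_injOn f (fun i _ => hfS i) hinj.injOn

lemma IsDominatingSet.dLegal_eq_empty (hS : IsDominatingSet G S)
    (hA : ∀ s ∈ S, closedNF G s ⊆ A) : dLegal G A = ∅ := by
  refine eq_empty_of_forall_notMem fun v hv => (mem_dLegal G).1 hv fun x _ => ?_
  obtain ⟨s, hs, hxs⟩ := hS x
  exact hA s hs hxs

variable [DecidableEq V]

lemma card_filter_not_closedNF_subset_anti {B : Finset V} (h : A ⊆ B) :
    #{s ∈ S | ¬ closedNF G s ⊆ B} ≤ #{s ∈ S | ¬ closedNF G s ⊆ A} :=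
  card_le_card (monotone_filter_right _ fun _ _ hB hA => hB (hA.trans h))

lemma card_filter_not_closedNF_subset_union_lt {s : V} (hs : s ∈ S)
    (hsA : ¬ closedNF G s ⊆ A) :
    #{t ∈ S | ¬ closedNF G t ⊆ A ∪ closedNF G s} < #{t ∈ S | ¬ closedNF G t ⊆ A} := by
  refine card_lt_card ⟨monotone_filter_right _ fun _ _ hB hA => hB (hA.trans subset_union_left),
    fun hsub => ?_⟩
  have := hsub (mem_filter.2 ⟨hs, hsA⟩)
  exact (mem_filter.1 this).2 subset_union_right

theorem dVal_le_of_isDominatingSet (hS : IsDominatingSet G S) (A : Finset V) :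
    dVal G true A ≤ 2 * #{s ∈ S | ¬ closedNF G s ⊆ A} - 1 ∧
      dVal G false A ≤ 2 * #{s ∈ S | ¬ closedNF G s ⊆ A} := by
  constructor
  · by_cases hA : ∃ s ∈ S, ¬ closedNF G s ⊆ A
    · obtain ⟨s, hs, hsA⟩ := hA
      have hv : s ∈ dLegal G A := (mem_dLegal G).2 hsA
      have := card_filter_not_closedNF_subset_union_lt hs hsA
      have := (dVal_le_of_isDominatingSet hS (A ∪ closedNF G s)).2
      have := dVal_true_le G hv
      omega
    · simp only [not_exists, not_and, not_not] at hA
      simp [dVal_eq_zero G true (not_nonempty_iff_eq_empty.2 (hS.dLegal_eq_empty hA))]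
  · obtain ⟨v, hv⟩ | hne := (dLegal G A).eq_empty_or_nonempty.symm
    · obtain ⟨x, -, hxA⟩ := not_subset.1 ((mem_dLegal G).1 hv)
      obtain ⟨s, hs, hxs⟩ := hS x
      have hpos : 0 < #{s ∈ S | ¬ closedNF G s ⊆ A} :=
        card_pos.2 ⟨s, mem_filter.2 ⟨hs, fun h => hxA (h hxs)⟩⟩
      have key := dVal_le_add_one G false (n := 2 * #{s ∈ S | ¬ closedNF G s ⊆ A} - 1)
        fun v hv => (dVal_le_of_isDominatingSet hS (A ∪ closedNF G v)).1.trans <|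
          Nat.sub_le_sub_right (Nat.mul_le_mul_left 2
            (card_filter_not_closedNF_subset_anti subset_union_left)) 1
      omega
    · simp [dVal_eq_zero G false (not_nonempty_iff_eq_empty.2 hne)]
termination_by #(univ \ A)
decreasing_by all_goals exact card_sdiff_union_closedNF_lt G hv

end Domination

section Weights

variable {k c c' : ℕ}

/-- The Erdős–Selfridge weight `2^(-c)`, scaled by `2^k`, of a star with `c` undominated
pendants. -/
def starWeight (k c : ℕ) : ℕ := if c = 0 then 0 else 2 ^ (k - c)

@[simp] lemma starWeight_zero : starWeight k 0 = 0 := rfl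

lemma starWeight_one : starWeight k 1 = 2 ^ (k - 1) := rfl

lemma one_le_starWeight (hc : c ≠ 0) : 1 ≤ starWeight k c := by
  simp [starWeight, hc, Nat.one_le_two_pow]

lemma starWeight_le : starWeight k c ≤ 2 ^ (k - 1) := by
  unfold starWeight
  split_ifs with hc
  · exact Nat.zero_le _
  · exact Nat.pow_le_pow_right two_pos (by omega)

lemma starWeight_pred (h2 : 2 ≤ c) (hck : c ≤ k) :
    starWeight k (c - 1) = 2 * starWeight k c := by
  rw [starWeight, starWeight, if_neg (by omega), if_neg (by omega), ← pow_succ']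
  congr 1
  omega

lemma starWeight_dvd (hc : c ≤ c') (hc' : c' ≠ 0) : starWeight k c' ∣ starWeight k c := by
  rw [starWeight, if_neg hc']
  unfold starWeight
  split_ifs
  · exact dvd_zero _
  · exact pow_dvd_pow 2 (by omega)

lemma add_le_of_dvd_of_lt {a b d : ℕ} (ha : d ∣ a) (hb : d ∣ b) (h : a < b) :
    a + d ≤ b := by
  obtain ⟨x, rfl⟩ := ha
  obtain ⟨y, rfl⟩ := hb
  have : x + 1 ≤ y := Nat.lt_of_mul_lt_mul_left h
  nlinarith

end Weights

abbrev HatV (V : Type*) (k : ℕ) : Type _ := (V ⊕ Unit) ⊕ (V ⊕ Unit) × Fin k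

section HatG

variable {G : SimpleGraph V} {k : ℕ}

@[simp] lemma hatG_adj_inr {p : (V ⊕ Unit) × Fin k} {x : HatV V k} :
    (hatG G k).Adj (Sum.inr p) x ↔ x = Sum.inl p.1 := by
  rcases x with a | q <;> simp [hatG, SimpleGraph.fromRel_adj, eq_comm]

@[simp] lemma hatG_adj_inl_inr {a : V ⊕ Unit} {p : (V ⊕ Unit) × Fin k} :
    (hatG G k).Adj (Sum.inl a) (Sum.inr p) ↔ p.1 = a := by
  simp [hatG, SimpleGraph.fromRel_adj]

lemma hatG_adj_universal (v : V) : (hatG G k).Adj (Sum.inl (Sum.inr ())) (Sum.inl (Sum.inl v)) := by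
  simp [hatG, SimpleGraph.fromRel_adj]

def starOf : HatV V k → V ⊕ Unit
  | Sum.inl a => a
  | Sum.inr p => p.1

def pendantsLeft (A : Finset (HatV V k)) (a : V ⊕ Unit) : ℕ :=
  #{i | (Sum.inr (a, i) : HatV V k) ∉ A}

variable {A B : Finset (HatV V k)} {a : V ⊕ Unit}

lemma pendantsLeft_le : pendantsLeft A a ≤ k :=
  (card_filter_le _ _).trans (card_fin k).le

lemma pendantsLeft_anti (h : A ⊆ B) : pendantsLeft B a ≤ pendantsLeft A a :=
  card_le_card (monotone_filter_right _ fun _ _ hB hA => hB (h hA))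

lemma exists_inr_notMem (h : pendantsLeft A a ≠ 0) :
    ∃ i, (Sum.inr (a, i) : HatV V k) ∉ A := by
  obtain ⟨i, hi⟩ := card_ne_zero.1 h
  exact ⟨i, (mem_filter.1 hi).2⟩

@[simp] lemma pendantsLeft_empty : pendantsLeft (∅ : Finset (HatV V k)) a = k := by
  simp [pendantsLeft]

variable [Fintype V]

lemma inr_mem_closedNF_hatG {p : (V ⊕ Unit) × Fin k} {x : HatV V k} :
    Sum.inr p ∈ closedNF (hatG G k) x ↔ x = Sum.inr p ∨ x = Sum.inl p.1 := by
  rw [mem_closedNF_comm]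
  simp

lemma starOf_eq_of_inr_mem {p : (V ⊕ Unit) × Fin k} {x : HatV V k}
    (h : Sum.inr p ∈ closedNF (hatG G k) x) : starOf x = p.1 := by
  rcases inr_mem_closedNF_hatG.1 h with rfl | rfl <;> rfl

lemma pendantsLeft_union_of_ne {v : HatV V k} (h : a ≠ starOf v) :
    pendantsLeft (A ∪ closedNF (hatG G k) v) a = pendantsLeft A a := by
  refine congrArg card (filter_congr fun i _ => ?_)
  simp only [mem_union, not_or, and_iff_left_iff_imp]
  exact fun _ hi => h (starOf_eq_of_inr_mem hi).symm

lemma pendantsLeft_union_inl : pendantsLeft (A ∪ closedNF (hatG G k) (Sum.inl a)) a = 0 := by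
  refine card_eq_zero.2 (filter_eq_empty_iff.2 fun i _ => ?_)
  simp

lemma filter_inr_notMem_union_inr (j : Fin k) :
    ({i | (Sum.inr (a, i) : HatV V k) ∉ A ∪ closedNF (hatG G k) (Sum.inr (a, j))} :
      Finset (Fin k))
      = ({i | (Sum.inr (a, i) : HatV V k) ∉ A} : Finset (Fin k)).erase j := by
  ext i
  simp [and_comm]

lemma pendantsLeft_union_inr_of_notMem {j : Fin k} (hj : (Sum.inr (a, j) : HatV V k) ∉ A) :
    pendantsLeft (A ∪ closedNF (hatG G k) (Sum.inr (a, j))) a + 1 = pendantsLeft A a := by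
  have hj' : j ∈ ({i | (Sum.inr (a, i) : HatV V k) ∉ A} : Finset (Fin k)) := by simp [hj]
  rw [pendantsLeft, filter_inr_notMem_union_inr, card_erase_of_mem hj', pendantsLeft,
    Nat.sub_add_cancel (card_pos.2 ⟨j, hj'⟩)]

lemma pendantsLeft_union_starOf (v : HatV V k) :
    pendantsLeft (A ∪ closedNF (hatG G k) v) (starOf v) = 0 ∨
      pendantsLeft A (starOf v) ≤ pendantsLeft (A ∪ closedNF (hatG G k) v) (starOf v) + 1 := by
  rcases v with a | ⟨a, j⟩
  · exact Or.inl pendantsLeft_union_inl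
  · refine Or.inr ?_
    simp only [starOf]
    unfold pendantsLeft
    rw [filter_inr_notMem_union_inr]
    exact Nat.le_add_of_sub_le pred_card_le_card_erase

lemma sum_add_eq_sum_add_of_eq_of_ne {ι : Type*} [Fintype ι] [DecidableEq ι] {f g : ι → ℕ}
    (b : ι) (h : ∀ a ≠ b, f a = g a) : ∑ a, f a + g b = ∑ a, g a + f b := by
  rw [← add_sum_erase univ f (mem_univ b), ← add_sum_erase univ g (mem_univ b),
    sum_congr rfl fun a ha => h a (ne_of_mem_erase ha)]
  ring

lemma sum_pendantsLeft_union (f : ℕ → ℕ) (v : HatV V k) :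
    ∑ a, f (pendantsLeft (A ∪ closedNF (hatG G k) v) a) + f (pendantsLeft A (starOf v)) =
      ∑ a, f (pendantsLeft A a) + f (pendantsLeft (A ∪ closedNF (hatG G k) v) (starOf v)) :=
  sum_add_eq_sum_add_of_eq_of_ne (f := fun a => f (pendantsLeft (A ∪ closedNF (hatG G k) v) a))
    (g := fun a => f (pendantsLeft A a)) (starOf v) fun a ha => by
      rw [pendantsLeft_union_of_ne ha]

def openStars (A : Finset (HatV V k)) : ℕ := ∑ a, min (pendantsLeft A a) 1

lemma exists_pendantsLeft_ne_zero (h : openStars A ≠ 0) : ∃ a, pendantsLeft A a ≠ 0 := by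
  by_contra! h'
  exact h (sum_eq_zero fun a _ => by simp [h' a])

lemma openStars_le_zVal (b : Bool) (A : Finset (HatV V k)) :
    openStars A ≤ zVal (hatG G k) b A := by
  refine le_zVal_of_potential _ openStars (fun B hB => ?_) (fun B v _ => ?_) b A
  · obtain ⟨a, ha⟩ := exists_pendantsLeft_ne_zero hB
    obtain ⟨i, hi⟩ := exists_inr_notMem ha
    exact ⟨Sum.inl a, (mem_zLegal _).2 fun h => hi (h (by simp))⟩
  · have := sum_pendantsLeft_union (G := G) (A := B) (fun c => min c 1) v
    unfold openStars
    omega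

lemma inl_mem_closedNF_universal (a : V ⊕ Unit) :
    (Sum.inl a : HatV V k) ∈ closedNF (hatG G k) (Sum.inl (Sum.inr ())) := by
  rcases a with u | ⟨⟩
  · exact (mem_closedNF _).2 (Or.inr (hatG_adj_universal u))
  · exact self_mem_closedNF _

lemma zVal_closedNF_universal_le (b : Bool) :
    zVal (hatG G k) b (closedNF (hatG G k) (Sum.inl (Sum.inr ()))) ≤ Fintype.card V := by
  have hsub : zLegal (hatG G k) (closedNF (hatG G k) (Sum.inl (Sum.inr ())))
      ⊆ univ.image fun u => Sum.inl (Sum.inl u) := by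
    rintro ((u | ⟨⟩) | ⟨a, i⟩) hx <;> rw [mem_zLegal] at hx
    · exact mem_image_of_mem _ (mem_univ u)
    · exact absurd (openNF_subset_closedNF _ _) hx
    · refine absurd (fun x hx => ?_) hx
      rw [mem_openNF, hatG_adj_inr] at hx
      exact hx ▸ inl_mem_closedNF_universal a
  calc zVal (hatG G k) b _ ≤ #(zLegal (hatG G k) _) := zVal_le_card_zLegal _ b _
    _ ≤ #(univ : Finset V) := (card_le_card hsub).trans card_image_le
    _ = Fintype.card V := card_univ

lemma isDominatingSet_supports :
    IsDominatingSet (hatG G k) (univ.map (Function.Embedding.inl : V ⊕ Unit ↪ HatV V k)) := by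
  rintro (a | ⟨a, i⟩)
  · exact ⟨Sum.inl a, mem_map_of_mem _ (mem_univ a), self_mem_closedNF _⟩
  · exact ⟨Sum.inl a, mem_map_of_mem _ (mem_univ a), inr_mem_closedNF_hatG.2 (Or.inr rfl)⟩

lemma card_supports :
    #(univ.map (Function.Embedding.inl : V ⊕ Unit ↪ HatV V k)) = Fintype.card V + 1 := by
  simp

lemma gammaNum_hatG (hk : k ≠ 0) : gammaNum (hatG G k) = Fintype.card V + 1 := by
  refine le_antisymm ((gammaNum_le_card isDominatingSet_supports).trans_eq card_supports) ?_
  let p : V ⊕ Unit → HatV V k := fun a => Sum.inr (a, ⟨0, Nat.pos_of_ne_zero hk⟩)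
  have hp : Pairwise fun a b => Disjoint (closedNF (hatG G k) (p a)) (closedNF (hatG G k) (p b)) :=
    fun a b hab => disjoint_left.2 fun x hxa hxb => hab <| by
      simp only [p, mem_closedNF, hatG_adj_inr] at hxa hxb
      rcases hxa with rfl | rfl <;> simpa using hxb
  simpa using card_le_gammaNum p hp

lemma gammaGg_hatG_le : gammaGg (hatG G k) + 1 ≤ 2 * (Fintype.card V + 1) := by
  have h := (dVal_le_of_isDominatingSet (isDominatingSet_supports (G := G) (k := k)) ∅).1
  have hfilter : {s ∈ univ.map (Function.Embedding.inl : V ⊕ Unit ↪ HatV V k) |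
      ¬ closedNF (hatG G k) s ⊆ ∅} = univ.map Function.Embedding.inl :=
    filter_true_of_mem fun s _ hs => notMem_empty s (hs (self_mem_closedNF _))
  rw [hfilter, card_supports] at h
  unfold gammaGg
  omega

def totalWeight (A : Finset (HatV V k)) : ℕ := ∑ a, starWeight k (pendantsLeft A a)

lemma openStars_le_totalWeight : openStars A ≤ totalWeight A :=
  sum_le_sum fun a _ => by
    rcases eq_or_ne (pendantsLeft A a) 0 with h | h
    · simp [h]
    · exact (min_le_right _ _).trans (one_le_starWeight h)

lemma totalWeight_eq_openStars_mul (h : ∀ a, pendantsLeft A a ≤ 1) :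
    totalWeight A = openStars A * 2 ^ (k - 1) := by
  rw [openStars, sum_mul]
  refine sum_congr rfl fun a _ => ?_
  rcases Nat.le_one_iff_eq_zero_or_eq_one.1 (h a) with h | h <;> simp [h, starWeight_one]

lemma starWeight_dvd_totalWeight {u : V ⊕ Unit}
    (hmax : ∀ a, pendantsLeft A a ≤ pendantsLeft A u)
    (hu : pendantsLeft A u ≠ 0) : starWeight k (pendantsLeft A u) ∣ totalWeight A :=
  dvd_sum fun a _ => starWeight_dvd (hmax a) hu

lemma openStars_totalWeight_union_closedNF (v : HatV V k) :
    (openStars (A ∪ closedNF (hatG G k) v) + 1 = openStars A ∧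
        totalWeight (A ∪ closedNF (hatG G k) v) < totalWeight A) ∨
      (openStars (A ∪ closedNF (hatG G k) v) = openStars A ∧
        totalWeight (A ∪ closedNF (hatG G k) v) < totalWeight A + 2 ^ (k - 1)) := by
  have hm := sum_pendantsLeft_union (G := G) (A := A) (fun c => min c 1) v
  have hw := sum_pendantsLeft_union (G := G) (A := A) (starWeight k) v
  have hanti := pendantsLeft_anti (a := starOf v)
    (subset_union_left : A ⊆ A ∪ closedNF (hatG G k) v)
  rw [← openStars, ← openStars] at hm
  rw [← totalWeight, ← totalWeight] at hw
  set c := pendantsLeft A (starOf v)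
  set c' := pendantsLeft (A ∪ closedNF (hatG G k) v) (starOf v)
  have hQ : 1 ≤ 2 ^ (k - 1) := Nat.one_le_two_pow
  have hcases := pendantsLeft_union_starOf (G := G) (A := A) v
  by_cases hclose : c' = 0 ∧ c ≠ 0
  · have := one_le_starWeight (k := k) hclose.2
    rw [hclose.1, starWeight_zero] at hw
    rw [hclose.1] at hm
    left
    omega
  · right
    obtain h | ⟨h, h2⟩ : c' = c ∨ c' + 1 = c ∧ 2 ≤ c := by omega
    · rw [h] at hm hw
      omega
    · have hpred := starWeight_pred (k := k) h2 pendantsLeft_le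
      have hle := starWeight_le (k := k) (c := c - 1)
      have := one_le_starWeight (k := k) (c := c) (by omega)
      rw [show c' = c - 1 by omega] at hm hw
      rw [hpred] at hw
      omega

lemma openStars_totalWeight_union_closedNF_inr {u : V ⊕ Unit} {j : Fin k}
    (hj : (Sum.inr (u, j) : HatV V k) ∉ A) :
    (pendantsLeft A u = 1 →
        openStars (A ∪ closedNF (hatG G k) (Sum.inr (u, j))) + 1 = openStars A ∧
          totalWeight (A ∪ closedNF (hatG G k) (Sum.inr (u, j))) + 2 ^ (k - 1) =
            totalWeight A) ∧
      (2 ≤ pendantsLeft A u →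
        openStars (A ∪ closedNF (hatG G k) (Sum.inr (u, j))) = openStars A ∧
          totalWeight (A ∪ closedNF (hatG G k) (Sum.inr (u, j))) =
            totalWeight A + starWeight k (pendantsLeft A u)) := by
  have hdec := pendantsLeft_union_inr_of_notMem (G := G) hj
  have hm := sum_pendantsLeft_union (G := G) (A := A) (fun c => min c 1) (Sum.inr (u, j))
  have hw := sum_pendantsLeft_union (G := G) (A := A) (starWeight k) (Sum.inr (u, j))
  rw [← openStars, ← openStars] at hm
  rw [← totalWeight, ← totalWeight] at hw
  simp only [starOf] at hm hw
  set c := pendantsLeft A u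
  set c' := pendantsLeft (A ∪ closedNF (hatG G k) (Sum.inr (u, j))) u
  refine ⟨fun hc => ?_, fun hc => ?_⟩
  · rw [hc, show c' = 0 by omega, starWeight_one, starWeight_zero] at hw
    rw [hc, show c' = 0 by omega] at hm
    omega
  · rw [show c' = c - 1 by omega, starWeight_pred hc pendantsLeft_le] at hw
    rw [show c' = c - 1 by omega] at hm
    omega

variable (G) in
def BoundAtDominatorTurn (A : Finset (HatV V k)) : Prop :=
  ∀ t, totalWeight A ≤ t * 2 ^ (k - 1) → 2 * openStars A ≤ dVal (hatG G k) true A + t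

variable (G) in
def BoundAtStallerTurn (A : Finset (HatV V k)) : Prop :=
  ∀ t, totalWeight A < (t + 1) * 2 ^ (k - 1) → 2 * openStars A ≤ dVal (hatG G k) false A + t

lemma boundAtDominatorTurn_of_forall
    (ih : ∀ v ∈ dLegal (hatG G k) A, BoundAtStallerTurn G (A ∪ closedNF (hatG G k) v)) :
    BoundAtDominatorTurn G A := by
  intro t hW
  by_cases hm : openStars A = 0
  · omega
  obtain ⟨a, ha⟩ := exists_pendantsLeft_ne_zero hm
  obtain ⟨i, hi⟩ := exists_inr_notMem ha
  have hne : (dLegal (hatG G k) A).Nonempty :=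
    ⟨Sum.inl a, (mem_dLegal _).2 fun h => hi (h (by simp))⟩
  have ht : 1 ≤ t := by
    by_contra! ht
    have := openStars_le_totalWeight (A := A)
    simp_all
  have hQ : (t - 1 + 1) * 2 ^ (k - 1) = t * 2 ^ (k - 1) := by rw [Nat.sub_add_cancel ht]
  have hQ' : (t + 1) * 2 ^ (k - 1) = t * 2 ^ (k - 1) + 2 ^ (k - 1) := add_one_mul _ _
  have key := add_one_le_dVal _ true hne (n := 2 * openStars A - t - 1) fun v hv => by
    rw [Bool.not_true]
    rcases openStars_totalWeight_union_closedNF (G := G) (A := A) v with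
      ⟨hm', hw'⟩ | ⟨hm', hw'⟩
    · have := ih v hv (t - 1) (by omega)
      omega
    · have := ih v hv t (by omega)
      omega
  omega

lemma boundAtStallerTurn_of_forall
    (ih : ∀ v ∈ dLegal (hatG G k) A, BoundAtDominatorTurn G (A ∪ closedNF (hatG G k) v)) :
    BoundAtStallerTurn G A := by
  intro t hW
  by_cases hm : openStars A = 0
  · omega
  obtain ⟨a, ha⟩ := exists_pendantsLeft_ne_zero hm
  obtain ⟨u, -, hmax⟩ := exists_max_image univ (pendantsLeft A) ⟨a, mem_univ a⟩
  replace hmax : ∀ b, pendantsLeft A b ≤ pendantsLeft A u := fun b => hmax b (mem_univ b)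
  have hu : pendantsLeft A u ≠ 0 := fun h => ha (Nat.le_zero.1 (h ▸ hmax a))
  obtain ⟨j, hj⟩ := exists_inr_notMem hu
  have hv : Sum.inr (u, j) ∈ dLegal (hatG G k) A :=
    (mem_dLegal _).2 fun h => hj (h (self_mem_closedNF _))
  have hstep := dVal_true_add_one_le_dVal_false _ hv
  have ih := ih _ hv
  obtain ⟨hthin, hfat⟩ := openStars_totalWeight_union_closedNF_inr (G := G) hj
  obtain hu1 | hu2 : pendantsLeft A u = 1 ∨ 2 ≤ pendantsLeft A u := by omega
  · obtain ⟨hm', hw'⟩ := hthin hu1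
    have hWm := totalWeight_eq_openStars_mul fun b => hu1 ▸ hmax b
    have hmt : openStars A ≤ t := Nat.lt_succ_iff.1 (Nat.lt_of_mul_lt_mul_right (hWm ▸ hW))
    have hmQ := Nat.mul_le_mul_right (2 ^ (k - 1)) hmt
    have hQ : (t - 1) * 2 ^ (k - 1) + 2 ^ (k - 1) = t * 2 ^ (k - 1) := by
      rw [← add_one_mul, Nat.sub_add_cancel (by omega)]
    have := ih (t - 1) (by omega)
    omega
  · obtain ⟨hm', hw'⟩ := hfat hu2
    -- All weights are multiples of the weight of the fullest star, and so is `(t + 1)·2^(k-1)`.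
    have hdvd : starWeight k (pendantsLeft A u) ∣ (t + 1) * 2 ^ (k - 1) :=
      Dvd.dvd.mul_left (starWeight_one (k := k) ▸ starWeight_dvd (by omega) hu) _
    have hle := add_le_of_dvd_of_lt (starWeight_dvd_totalWeight hmax hu) hdvd hW
    have := ih (t + 1) (by omega)
    omega

theorem boundAtDominatorTurn_and_boundAtStallerTurn (A : Finset (HatV V k)) :
    BoundAtDominatorTurn G A ∧ BoundAtStallerTurn G A :=
  ⟨boundAtDominatorTurn_of_forall fun v _ =>
      (boundAtDominatorTurn_and_boundAtStallerTurn (A ∪ closedNF (hatG G k) v)).2,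
    boundAtStallerTurn_of_forall fun v _ =>
      (boundAtDominatorTurn_and_boundAtStallerTurn (A ∪ closedNF (hatG G k) v)).1⟩
termination_by #(univ \ A)
decreasing_by all_goals exact card_sdiff_union_closedNF_lt _ ‹_›

lemma openStars_empty (hk : k ≠ 0) :
    openStars (∅ : Finset (HatV V k)) = Fintype.card V + 1 := by
  simp [openStars, Nat.one_le_iff_ne_zero.2 hk]

lemma totalWeight_empty (hk : k ≠ 0) :
    totalWeight (∅ : Finset (HatV V k)) = Fintype.card V + 1 := by
  simp [totalWeight, starWeight, hk]

lemma gammaZg_hatG [Nonempty V] (hk : k ≠ 0) : gammaZg (hatG G k) = Fintype.card V + 1 := by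
  obtain ⟨v⟩ := ‹Nonempty V›
  have hw : (Sum.inl (Sum.inr ()) : HatV V k) ∈ zLegal (hatG G k) ∅ :=
    (mem_zLegal _).2 fun h => notMem_empty _ (h ((mem_openNF _).2 (hatG_adj_universal v)))
  have hle := zVal_true_le _ hw
  rw [empty_union] at hle
  have := zVal_closedNF_universal_le (G := G) (k := k) false
  have hge := openStars_le_zVal (G := G) true (∅ : Finset (HatV V k))
  rw [openStars_empty hk] at hge
  unfold gammaZg
  omega

lemma gammaGg_hatG (hk : k ≠ 0) (hQ : Fintype.card V + 1 ≤ 2 ^ (k - 1)) :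
    gammaGg (hatG G k) + 1 = 2 * (Fintype.card V + 1) := by
  have hge := (boundAtDominatorTurn_and_boundAtStallerTurn (G := G) ∅).1 1
    (by rwa [totalWeight_empty hk, one_mul])
  rw [openStars_empty hk] at hge
  have := gammaGg_hatG_le (G := G) (k := k)
  unfold gammaGg at *
  omega

end HatG

theorem hatG_gamma_eqs_general {V : Type*} [Fintype V] (G : SimpleGraph V)
    (hcard : 3 ≤ Fintype.card V) :
    gammaZg (hatG G (Nat.clog 2 (Fintype.card V + 1) + 1)) = Fintype.card V + 1 ∧
    gammaNum (hatG G (Nat.clog 2 (Fintype.card V + 1) + 1)) = Fintype.card V + 1 ∧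
    gammaGg (hatG G (Nat.clog 2 (Fintype.card V + 1) + 1)) + 1 = 2 * (Fintype.card V + 1) := by
  have hk : Nat.clog 2 (Fintype.card V + 1) + 1 ≠ 0 := Nat.succ_ne_zero _
  have : Nonempty V := Fintype.card_pos_iff.1 (by omega)
  exact ⟨gammaZg_hatG hk, gammaNum_hatG hk, gammaGg_hatG hk (Nat.le_pow_clog one_lt_two _)⟩

/-- If `G` is a connected graph with `n(G) ≥ 3` and `Ĝ` is obtained
from `G` by adding a universal vertex `w` and `⌈log₂(n(G)+1)⌉ + 1` pendant vertices at
each vertex of `V(G) ∪ {w}`, then `γ_Zg(Ĝ) = γ(Ĝ) = (γ_g(Ĝ) + 1)/2 = n(G) + 1`. -/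
theorem hatG_gamma_eqs {V : Type*} [Fintype V] (G : SimpleGraph V)
    (hconn : G.Connected) (hcard : 3 ≤ Fintype.card V) :
    gammaZg (hatG G (Nat.clog 2 (Fintype.card V + 1) + 1)) = Fintype.card V + 1 ∧
    gammaNum (hatG G (Nat.clog 2 (Fintype.card V + 1) + 1)) = Fintype.card V + 1 ∧
    gammaGg (hatG G (Nat.clog 2 (Fintype.card V + 1) + 1)) + 1 = 2 * (Fintype.card V + 1) :=
  hatG_gamma_eqs_general G hcard

end ZGamePaper
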